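/- arXiv:2206.02641 — 4 statements merged into one kernel-verified Lean document; each statement's English description precedes it below -/
import Mathlib

section
/- Let H ∈ (0,3/4). Then there exists a constant c_H > 0, independent of n and of the parameters λ_i, such that for every integer n ≥ 1 and every choice of λ_2,…,λ_n ∈ (0,1], one has 𝕀_n(λ) = E[ |X_1|^{1−2H} · ∏_{i=2}^n |λ_i X_i − √(1−λ_i²) X_{i−1}|^{1−2H} ] ≥ c_H^n. -/
open MeasureTheory ProbabilityTheory Real ENNReal

/-- The law of `m` i.i.d. standard Gaussian random variables. -/
noncomputable def stdGaussianPi (m : ℕ) : Measure (Fin m → ℝ) :=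
  Measure.pi fun _ => gaussianReal 0 1

/-- `𝕀_{n+1}(λ) = E[ |X_1|^{1−2H} ∏_{i=2}^{n+1} |λ_i X_i − √(1−λ_i²) X_{i−1}|^{1−2H} ]`,
the expectation (valued in `[0,∞]`) over `n+1` i.i.d. standard Gaussians `X_1, …, X_{n+1}`;
here `X j` stands for `X_{j+1}` and `lam j` for `λ_{j+1}`, `j : Fin (n+1)` (`lam 0` unused). -/
noncomputable def IknE (n : ℕ) (H : ℝ) (lam : Fin (n + 1) → ℝ) : ℝ≥0∞ :=
  ∫⁻ X : Fin (n + 1) → ℝ,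
    ENNReal.ofReal (|X 0| ^ (1 - 2 * H) *
      ∏ i : Fin n,
        |lam i.succ * X i.succ - Real.sqrt (1 - (lam i.succ) ^ 2) * X i.castSucc| ^
          (1 - 2 * H)) ∂(stdGaussianPi (n + 1))

lemma aux_rpow_bound {H b : ℝ} (h1 : 1 ≤ b) (h4 : b ≤ 4) :
    min 1 ((4:ℝ) ^ (1 - 2*H)) ≤ b ^ (1 - 2*H) := by
  rcases le_or_gt 0 (1 - 2*H) with he | he
  · refine le_trans (min_le_left _ _) ?_
    calc (1:ℝ) = 1 ^ (1-2*H) := (Real.one_rpow _).symm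
    _ ≤ b ^ (1-2*H) := Real.rpow_le_rpow zero_le_one h1 he
  · exact le_trans (min_le_right _ _)
      (Real.rpow_le_rpow_of_nonpos (lt_of_lt_of_le one_pos h1) h4 he.le)

lemma aux_interval {l s a b : ℝ} (hl : 0 < l) (hl1 : l ≤ 1) (hs : 0 ≤ s) (hs1 : s ≤ 1)
    (hls : 1 ≤ l + s) (ha : a ∈ Set.Icc (1:ℝ) 2) (hb : b ∈ Set.Icc (-2:ℝ) (-1)) :
    |l * a - s * b| ∈ Set.Icc (1:ℝ) 4 := by
  obtain ⟨ha1, ha2⟩ := ha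
  obtain ⟨hb1, hb2⟩ := hb
  have hv : 1 ≤ l * a - s * b := by nlinarith
  rw [abs_of_nonneg (by linarith)]
  exact ⟨hv, by nlinarith⟩

/-- For `H ∈ (0, 3/4)` there is `c_H > 0`, independent of `n` and of
the `λ_i`, such that for every `n ≥ 1` (here `n+1` Gaussians) and all
`λ_2, …, λ_{n+1} ∈ (0,1]`, `𝕀_{n+1}(λ) ≥ c_H^{n+1}`. -/
theorem Ikn_lower_bound_regular (H : ℝ) (hH : H ∈ Set.Ioo (0 : ℝ) (3/4)) :
    ∃ c : ℝ, 0 < c ∧ ∀ (n : ℕ) (lam : Fin (n + 1) → ℝ),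
      (∀ i : Fin n, lam i.succ ∈ Set.Ioc (0 : ℝ) 1) →
      ENNReal.ofReal (c ^ (n + 1)) ≤ IknE n H lam := by
  set ν := gaussianReal 0 1 with hν
  have hq1 : ν (Set.Icc 1 2) ≠ 0 := by
    intro h
    have := (gaussianReal_absolutelyContinuous' 0 one_ne_zero) h
    simp [Real.volume_Icc] at this
  have hq2 : ν (Set.Icc (-2) (-1)) ≠ 0 := by
    intro h
    have := (gaussianReal_absolutelyContinuous' 0 one_ne_zero) h
    simp [Real.volume_Icc] at this
  have hfin1 : ν (Set.Icc 1 2) ≠ ⊤ := measure_ne_top _ _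
  have hfin2 : ν (Set.Icc (-2) (-1)) ≠ ⊤ := measure_ne_top _ _
  set p : ℝ := min (ν (Set.Icc 1 2)).toReal (ν (Set.Icc (-2) (-1))).toReal with hp
  have hp0 : 0 < p :=
    lt_min (ENNReal.toReal_pos hq1 hfin1) (ENNReal.toReal_pos hq2 hfin2)
  set m : ℝ := min 1 ((4:ℝ) ^ (1 - 2*H)) with hm
  have hm0 : 0 < m := lt_min one_pos (Real.rpow_pos_of_pos (by norm_num) _)
  refine ⟨m * p, mul_pos hm0 hp0, ?_⟩
  intro n lam hlam
  -- the event
  set S : Fin (n+1) → Set ℝ := fun j => if Even (j:ℕ) then Set.Icc 1 2 else Set.Icc (-2) (-1)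
    with hS
  have hSmeas : ∀ j, MeasurableSet (S j) := by
    intro j; simp only [hS]; split <;> exact measurableSet_Icc
  set A : Set (Fin (n+1) → ℝ) := Set.univ.pi S with hA
  have hAmeas : MeasurableSet A := MeasurableSet.univ_pi hSmeas
  -- measure of event
  have hmeasA : (ENNReal.ofReal p) ^ (n+1) ≤ stdGaussianPi (n+1) A := by
    rw [hA, stdGaussianPi, Measure.pi_pi]
    calc (ENNReal.ofReal p) ^ (n+1) = ∏ _j : Fin (n+1), ENNReal.ofReal p := by
          simp [Finset.prod_const]
      _ ≤ ∏ j : Fin (n+1), ν (S j) := by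
          refine Finset.prod_le_prod' fun j _ => ?_
          simp only [hS]
          split
          · calc ENNReal.ofReal p ≤ ENNReal.ofReal (ν (Set.Icc 1 2)).toReal :=
                  ENNReal.ofReal_le_ofReal (min_le_left _ _)
              _ = ν (Set.Icc 1 2) := ENNReal.ofReal_toReal hfin1
          · calc ENNReal.ofReal p ≤ ENNReal.ofReal (ν (Set.Icc (-2) (-1))).toReal :=
                  ENNReal.ofReal_le_ofReal (min_le_right _ _)
              _ = ν (Set.Icc (-2) (-1)) := ENNReal.ofReal_toReal hfin2
  -- pointwise bound on the event
  have hpt : ∀ X ∈ A, m ^ (n+1) ≤ |X 0| ^ (1 - 2*H) *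
      ∏ i : Fin n,
        |lam i.succ * X i.succ - Real.sqrt (1 - (lam i.succ) ^ 2) * X i.castSucc| ^
          (1 - 2*H) := by
    intro X hX
    have hXj : ∀ j, X j ∈ S j := fun j => hX j (Set.mem_univ j)
    have hX0 : X 0 ∈ Set.Icc (1:ℝ) 2 := by
      have := hXj 0
      simpa [hS] using this
    have h0 : m ≤ |X 0| ^ (1 - 2*H) := by
      have h1 : (1:ℝ) ≤ |X 0| := by
        rw [abs_of_nonneg (by linarith [hX0.1])]; exact hX0.1
      have h4 : |X 0| ≤ 4 := by
        rw [abs_of_nonneg (by linarith [hX0.1])]; linarith [hX0.2]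
      exact aux_rpow_bound h1 h4
    have hfac : ∀ i : Fin n, m ≤
        |lam i.succ * X i.succ - Real.sqrt (1 - (lam i.succ) ^ 2) * X i.castSucc| ^ (1 - 2*H) := by
      intro i
      obtain ⟨hl0, hl1⟩ := hlam i
      set l := lam i.succ
      set s := Real.sqrt (1 - l ^ 2) with hs
      have hs0 : 0 ≤ s := Real.sqrt_nonneg _
      have hs1 : s ≤ 1 := by
        rw [hs]
        exact Real.sqrt_le_one.mpr (by nlinarith)
      have hssq : s ^ 2 = 1 - l ^ 2 := Real.sq_sqrt (by nlinarith)
      have hls : 1 ≤ l + s := by nlinarith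
      have hsucc : (i.succ : ℕ) = (i : ℕ) + 1 := rfl
      have hcast : (i.castSucc : ℕ) = (i : ℕ) := rfl
      have habs : |l * X i.succ - s * X i.castSucc| ∈ Set.Icc (1:ℝ) 4 := by
        rcases Nat.even_or_odd (i : ℕ) with he | ho
        · -- castSucc even, succ odd
          have hnot : ¬ Even ((i:ℕ) + 1) := fun h => (Nat.even_add_one.mp h) he
          have hc : X i.castSucc ∈ Set.Icc (1:ℝ) 2 := by
            have h' := hXj i.castSucc
            simp only [hS] at h'
            rwa [hcast, if_pos he] at h'
          have hsu : X i.succ ∈ Set.Icc (-2:ℝ) (-1) := by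
            have h' := hXj i.succ
            simp only [hS] at h'
            rwa [hsucc, if_neg hnot] at h'
          have := aux_interval hl0 hl1 hs0 hs1 hls
            (a := - X i.succ) (b := - X i.castSucc)
            (by constructor <;> [linarith [hsu.2]; linarith [hsu.1]])
            (by constructor <;> [linarith [hc.2]; linarith [hc.1]])
          have heq : |l * X i.succ - s * X i.castSucc| =
              |l * (- X i.succ) - s * (- X i.castSucc)| := by
            rw [show l * (- X i.succ) - s * (- X i.castSucc)
                = -(l * X i.succ - s * X i.castSucc) by ring, abs_neg]
          rw [heq]; exact this
        · have hsucc_even : Even ((i:ℕ) + 1) :=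
            Nat.even_add_one.mpr (Nat.not_even_iff_odd.mpr ho)
          have hsu : X i.succ ∈ Set.Icc (1:ℝ) 2 := by
            have h' := hXj i.succ
            simp only [hS] at h'
            rwa [hsucc, if_pos hsucc_even] at h'
          have hc : X i.castSucc ∈ Set.Icc (-2:ℝ) (-1) := by
            have h' := hXj i.castSucc
            simp only [hS] at h'
            rwa [hcast, if_neg (Nat.not_even_iff_odd.mpr ho)] at h'
          exact aux_interval hl0 hl1 hs0 hs1 hls hsu hc
      exact aux_rpow_bound habs.1 habs.2
    calc m ^ (n+1) = m * m ^ n := by ring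
      _ ≤ |X 0| ^ (1 - 2*H) * ∏ i : Fin n,
            |lam i.succ * X i.succ - Real.sqrt (1 - (lam i.succ) ^ 2) * X i.castSucc| ^
              (1 - 2*H) := by
          refine mul_le_mul h0 ?_ (by positivity) ?_
          · calc m ^ n = ∏ _i : Fin n, m := by simp [Finset.prod_const]
              _ ≤ _ := Finset.prod_le_prod (fun i _ => hm0.le) (fun i _ => hfac i)
          · positivity
  -- put it together
  have key : ENNReal.ofReal (m ^ (n+1)) * stdGaussianPi (n+1) A ≤ IknE n H lam := by
    rw [IknE, ← lintegral_indicator_const hAmeas]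
    refine lintegral_mono fun X => ?_
    by_cases hX : X ∈ A
    · simp only [Set.indicator_of_mem hX]
      exact ENNReal.ofReal_le_ofReal (hpt X hX)
    · simp [Set.indicator_of_notMem hX]
  calc ENNReal.ofReal ((m * p) ^ (n+1))
      = ENNReal.ofReal (m ^ (n+1) * p ^ (n+1)) := by rw [mul_pow]
    _ = ENNReal.ofReal (m ^ (n+1)) * ENNReal.ofReal (p ^ (n+1)) :=
        ENNReal.ofReal_mul (by positivity)
    _ = ENNReal.ofReal (m ^ (n+1)) * (ENNReal.ofReal p) ^ (n+1) := by
        rw [ENNReal.ofReal_pow hp0.le]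
    _ ≤ ENNReal.ofReal (m ^ (n+1)) * stdGaussianPi (n+1) A :=
        mul_le_mul_right hmeasA _
    _ ≤ IknE n H lam := key
end

section
/- Let H ∈ [3/4,1). Then there exists a constant c_H > 0, independent of λ, such that for every λ ∈ (0,1], one has E[ |X_1|^{1−2H} · |λ X_2 − √(1−λ²) X_1|^{1−2H} ] ≥ c_H · λ^{−(4H−3)}. -/
open MeasureTheory ProbabilityTheory Real ENNReal

/-!
On the box `X 0 ∈ (λ/2, λ]`, `X 1 ∈ (1, 2]` both `|X 0|` and `|λ X 1 - √(1-λ²) X 0|` lie in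
`(0, 2λ]`, so for the nonpositive exponent `1 - 2H` the integrand is at least a constant times
`λ^{2(1-2H)}`, while the box has Gaussian measure of order `λ`. This gives `c λ^{3-4H}`.
-/

open Set
open scoped NNReal

lemma gaussianPDFReal_le_of_abs_sub_le {μ : ℝ} {v : ℝ≥0} {x y : ℝ} (h : |x - μ| ≤ |y - μ|) :
    gaussianPDFReal μ v y ≤ gaussianPDFReal μ v x := by
  unfold gaussianPDFReal
  gcongr _ * rexp (-?_ / _)
  exact sq_le_sq.mpr h

lemma ofReal_mul_sub_le_gaussianReal_Ioc {μ : ℝ} {v : ℝ≥0} (hv : v ≠ 0) {r a b : ℝ}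
    (ha : μ - r ≤ a) (hb : b ≤ μ + r) :
    ENNReal.ofReal (gaussianPDFReal μ v (μ + r) * (b - a)) ≤ gaussianReal μ v (Ioc a b) := by
  rw [gaussianReal_apply μ hv, ENNReal.ofReal_mul (gaussianPDFReal_nonneg _ _ _),
    ← Real.volume_Ioc, ← setLIntegral_const]
  refine setLIntegral_mono' measurableSet_Ioc fun x hx => ENNReal.ofReal_le_ofReal ?_
  refine gaussianPDFReal_le_of_abs_sub_le ?_
  rw [add_sub_cancel_left, abs_le]
  constructor <;> linarith [hx.1, hx.2, le_abs_self r, neg_abs_le r]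

lemma const_mul_measure_le_lintegral {α : Type*} [MeasurableSpace α] {μ : Measure α}
    {f : α → ℝ≥0∞} {s : Set α} (hs : MeasurableSet s) {c : ℝ≥0∞} (h : ∀ x ∈ s, c ≤ f x) :
    c * μ s ≤ ∫⁻ x, f x ∂μ :=
  calc c * μ s = ∫⁻ _ in s, c ∂μ := (setLIntegral_const s c).symm
    _ ≤ ∫⁻ x in s, f x ∂μ := setLIntegral_mono' hs h
    _ ≤ ∫⁻ x, f x ∂μ := setLIntegral_le_lintegral s f

lemma stdGaussianPi_two_univ_pi (s t : Set ℝ) :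
    stdGaussianPi 2 (univ.pi ![s, t]) = gaussianReal 0 1 s * gaussianReal 0 1 t := by
  rw [stdGaussianPi, Measure.pi_pi, Fin.prod_univ_two]
  rfl

lemma mul_sub_mul_mem_Ioc {lam m x y : ℝ} (hm₀ : 0 ≤ m) (hm₁ : m ≤ 1) (hx : x ∈ Ioc 0 lam)
    (hy : y ∈ Ioc 1 2) : lam * y - m * x ∈ Ioc 0 (2 * lam) := by
  obtain ⟨hx₀, hx₁⟩ := hx
  obtain ⟨hy₁, hy₂⟩ := hy
  have hlam : 0 < lam := hx₀.trans_le hx₁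
  constructor <;> nlinarith

theorem exists_const_mul_rpow_le_lintegral {p : ℝ} (hp : p ≤ 0) :
    ∃ c : ℝ, 0 < c ∧ ∀ lam ∈ Ioc (0 : ℝ) 1, ∀ m ∈ Icc (0 : ℝ) 1,
      ENNReal.ofReal (c * lam ^ (2 * p + 1)) ≤
        ∫⁻ X : Fin 2 → ℝ, ENNReal.ofReal (|X 0| ^ p * |lam * X 1 - m * X 0| ^ p)
          ∂(stdGaussianPi 2) := by
  set q := gaussianPDFReal 0 1 (0 + 2)
  have hq : 0 < q := gaussianPDFReal_pos _ _ _ one_ne_zero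
  refine ⟨2 ^ p * q ^ 2 / 2, by positivity, fun lam ⟨hlam₀, hlam₁⟩ m ⟨hm₀, hm₁⟩ => ?_⟩
  set box : Set (Fin 2 → ℝ) := univ.pi ![Ioc (lam / 2) lam, Ioc 1 2]
  have hbound : ∀ X ∈ box, ENNReal.ofReal (lam ^ p * (2 * lam) ^ p) ≤
      ENNReal.ofReal (|X 0| ^ p * |lam * X 1 - m * X 0| ^ p) := by
    intro X hX
    simp only [box, mem_univ_pi, Fin.forall_fin_two] at hX
    obtain ⟨⟨hX₀, hX₀'⟩, hX₁⟩ := hX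
    have hX₀pos : 0 < X 0 := by linarith
    obtain ⟨hz₀, hz₁⟩ := mul_sub_mul_mem_Ioc hm₀ hm₁ ⟨hX₀pos, hX₀'⟩ hX₁
    rw [abs_of_pos hX₀pos, abs_of_pos hz₀]
    exact ENNReal.ofReal_le_ofReal (mul_le_mul (rpow_le_rpow_of_nonpos hX₀pos hX₀' hp)
      (rpow_le_rpow_of_nonpos hz₀ hz₁ hp) (by positivity) (by positivity))
  have hbox : ENNReal.ofReal (q * (lam - lam / 2)) * ENNReal.ofReal (q * (2 - 1)) ≤
      stdGaussianPi 2 box := by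
    rw [stdGaussianPi_two_univ_pi]
    gcongr <;> apply ofReal_mul_sub_le_gaussianReal_Ioc one_ne_zero <;> linarith
  have hconst : 2 ^ p * q ^ 2 / 2 * lam ^ (2 * p + 1) =
      lam ^ p * (2 * lam) ^ p * (q * (lam - lam / 2) * (q * (2 - 1))) := by
    rw [mul_rpow zero_le_two hlam₀.le, two_mul, rpow_add hlam₀, rpow_add hlam₀, Real.rpow_one]
    ring
  calc ENNReal.ofReal (2 ^ p * q ^ 2 / 2 * lam ^ (2 * p + 1))
      = ENNReal.ofReal (lam ^ p * (2 * lam) ^ p) *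
          (ENNReal.ofReal (q * (lam - lam / 2)) * ENNReal.ofReal (q * (2 - 1))) := by
        rw [hconst, ENNReal.ofReal_mul (by positivity),
          ENNReal.ofReal_mul (mul_nonneg hq.le (by linarith))]
    _ ≤ ENNReal.ofReal (lam ^ p * (2 * lam) ^ p) * stdGaussianPi 2 box := by gcongr
    _ ≤ _ := const_mul_measure_le_lintegral (MeasurableSet.univ_pi fun i => by
          fin_cases i <;> exact measurableSet_Ioc) hbound

/-- For `H ∈ [3/4, 1)` there is `c_H > 0`, independent of `λ`, such
that for every `λ ∈ (0,1]`,
`E[ |X_1|^{1−2H} |λ X_2 − √(1−λ²) X_1|^{1−2H} ] ≥ c_H λ^{−(4H−3)}`. -/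
theorem Ik2_lower_bound_rough (H : ℝ) (hH : H ∈ Set.Ico (3/4 : ℝ) 1) :
    ∃ c : ℝ, 0 < c ∧ ∀ lam : ℝ, lam ∈ Set.Ioc (0 : ℝ) 1 →
      ENNReal.ofReal (c * lam ^ (-(4 * H - 3))) ≤
        ∫⁻ X : Fin 2 → ℝ,
          ENNReal.ofReal (|X 0| ^ (1 - 2 * H) *
            |lam * X 1 - Real.sqrt (1 - lam ^ 2) * X 0| ^ (1 - 2 * H))
          ∂(stdGaussianPi 2) := by
  obtain ⟨c, hc, hle⟩ := exists_const_mul_rpow_le_lintegral (p := 1 - 2 * H) (by linarith [hH.1])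
  refine ⟨c, hc, fun lam hlam => ?_⟩
  have hexp : -(4 * H - 3) = 2 * (1 - 2 * H) + 1 := by ring
  rw [hexp]
  exact hle lam hlam _ ⟨sqrt_nonneg _, sqrt_le_one.mpr (by nlinarith [hlam.1, hlam.2])⟩
end

section
/- Let d ≥ 1, H_0 ∈ (1/2,1) and H = (H_1,…,H_d) ∈ (0,1)^d. If |H| + 2H_0 ≤ d, then for every t > 0 the first-chaos integral diverges: ∫_0^t ∫_0^t ∫_{ℝ^d} exp(−(1/2)(2t − s − r)|ξ|²) · ∏_{k=1}^d |ξ_k|^{1−2H_k} · |s − r|^{2H_0−2} dξ ds dr = +∞. -/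
open MeasureTheory Real ENNReal

/-! Each dyadic block near the corner `s = r = t` contributes a fixed positive amount. For
`b = 2ⁿ` and `δ = t / b²`, on `s ∈ (t - δ, t - δ/2)`, `r ∈ (t - δ/2, t)`, `ξ ∈ [b, 2b]^d` the
Gaussian factor is at least `exp (-4dt)`, the product is at least `2⁻ᵈ b^(d - 2|H|)` and
`|s - r|^(2H₀-2) ≥ δ^(2H₀-2)`. With the volume `bᵈ δ²/4` of the block, `b` enters only
through `b^(2d - 2|H| - 4H₀) ≥ 1`, as `|H| + 2H₀ ≤ d`. The `s`-windows are
pairwise disjoint, so these contributions sum to `∞`. -/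

open scoped Function

theorem lintegral_eq_top_of_pairwise_disjoint_const_le {α : Type*} [MeasurableSpace α]
    {μ : Measure α} {f : α → ℝ≥0∞} {S : ℕ → Set α} {c : ℝ≥0∞}
    (hS : ∀ n, MeasurableSet (S n)) (hdisj : Pairwise (Disjoint on S)) (hc : c ≠ 0)
    (hle : ∀ n, c ≤ ∫⁻ x in S n, f x ∂μ) :
    ∫⁻ x, f x ∂μ = ⊤ := by
  refine top_le_iff.mp ?_
  calc ⊤ = ∑' _ : ℕ, c := (ENNReal.tsum_const_eq_top_of_ne_zero hc).symm
    _ ≤ ∑' n, ∫⁻ x in S n, f x ∂μ := ENNReal.tsum_le_tsum hle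
    _ = ∫⁻ x in ⋃ n, S n, f x ∂μ := (lintegral_iUnion hS hdisj f).symm
    _ ≤ ∫⁻ x, f x ∂μ := setLIntegral_le_lintegral _ _

theorem const_mul_measure_le_setLIntegral {α : Type*} [MeasurableSpace α] {μ : Measure α}
    {f : α → ℝ≥0∞} {s : Set α} {c : ℝ≥0∞} (hs : MeasurableSet s) (hc : ∀ x ∈ s, c ≤ f x) :
    c * μ s ≤ ∫⁻ x in s, f x ∂μ := by
  rw [← setLIntegral_const]
  exact setLIntegral_mono' hs hc

theorem pairwise_disjoint_Ioo_sub_half {ι : Type*} [LinearOrder ι] {a : ℝ} {δ : ι → ℝ}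
    (hδ : ∀ ⦃m n⦄, m < n → δ n ≤ δ m / 2) :
    Pairwise (Disjoint on fun n => Set.Ioo (a - δ n) (a - δ n / 2)) :=
  (pairwise_disjoint_on _).2 fun _ _ hmn =>
    Set.disjoint_left.2 fun _ hm hn => by linarith [hm.2, hn.1, hδ hmn]

theorem half_mul_rpow_le_rpow {b x p : ℝ} (hb : 0 < b) (hbx : b ≤ x) (hx : x ≤ 2 * b)
    (hp : -1 ≤ p) : 2⁻¹ * b ^ p ≤ x ^ p := by
  rcases le_total 0 p with hp0 | hp0
  · calc 2⁻¹ * b ^ p ≤ b ^ p := by linarith [rpow_nonneg hb.le p]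
      _ ≤ x ^ p := rpow_le_rpow hb.le hbx hp0
  · calc 2⁻¹ * b ^ p = 2 ^ (-1 : ℝ) * b ^ p := by rw [Real.rpow_neg_one]
      _ ≤ 2 ^ p * b ^ p := by gcongr; norm_num
      _ = (2 * b) ^ p := (mul_rpow zero_le_two hb.le).symm
      _ ≤ x ^ p := rpow_le_rpow_of_nonpos (hb.trans_le hbx) hx hp0

theorem half_pow_mul_rpow_sum_le_prod_rpow {ι : Type*} [Fintype ι] {b : ℝ} {x p : ι → ℝ}
    (hb : 0 < b) (hx : ∀ i, x i ∈ Set.Icc b (2 * b)) (hp : ∀ i, -1 ≤ p i) :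
    2⁻¹ ^ Fintype.card ι * b ^ ∑ i, p i ≤ ∏ i, x i ^ p i := by
  rw [rpow_sum_of_pos hb, ← Finset.card_univ, ← Finset.prod_const, ← Finset.prod_mul_distrib]
  exact Finset.prod_le_prod (fun i _ => by positivity)
    fun i _ => half_mul_rpow_le_rpow hb (hx i).1 (hx i).2 (hp i)

theorem le_rpow_mul_rpow_mul_sq {b t κ H0 : ℝ} (hb : 1 ≤ b) (ht : 0 < t) (hκ : 4 * H0 ≤ κ) :
    t ^ (2 * H0) ≤ b ^ κ * ((t / b ^ 2) ^ (2 * H0 - 2) * (t / b ^ 2) ^ 2) := by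
  have hb0 : 0 < b := one_pos.trans_le hb
  have hδ : (t / b ^ 2) ^ (2 * H0 - 2) * (t / b ^ 2) ^ 2 = t ^ (2 * H0) / b ^ (4 * H0) := by
    rw [show (2 : ℝ) * H0 - 2 = 2 * H0 - (2 : ℕ) by norm_num,
      rpow_sub_natCast (by positivity), div_mul_cancel₀ _ (by positivity),
      div_rpow ht.le (by positivity), ← rpow_natCast_mul hb0.le]
    ring_nf
  rw [hδ, ← mul_div_assoc, le_div_iff₀ (by positivity), mul_comm]
  gcongr

noncomputable def firstChaosKernel {ι : Type*} [Fintype ι] (H0 : ℝ) (H : ι → ℝ) (t s r : ℝ)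
    (ξ : ι → ℝ) : ℝ :=
  Real.exp (-(1/2) * (2 * t - s - r) * ∑ k, (ξ k) ^ 2) *
    (∏ k, |ξ k| ^ (1 - 2 * H k)) * |s - r| ^ (2 * H0 - 2)

section Block

variable {ι : Type*} [Fintype ι] {H0 t b δ : ℝ} {H : ι → ℝ}

theorem le_firstChaosKernel {s r : ℝ} {ξ : ι → ℝ} (hH0 : H0 ≤ 1) (hH : ∀ k, H k ≤ 1)
    (hb : 0 < b) (hξ : ∀ k, ξ k ∈ Set.Icc b (2 * b)) (hs : s ∈ Set.Ioo (t - δ) (t - δ / 2))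
    (hr : r ∈ Set.Ioo (t - δ / 2) t) :
    Real.exp (-(4 * Fintype.card ι * δ * b ^ 2)) *
        (2⁻¹ ^ Fintype.card ι * b ^ ∑ k, (1 - 2 * H k)) * δ ^ (2 * H0 - 2) ≤
      firstChaosKernel H0 H t s r ξ := by
  obtain ⟨hs₁, hs₂⟩ := hs
  obtain ⟨hr₁, hr₂⟩ := hr
  have hsq : ∑ k, ξ k ^ 2 ≤ Fintype.card ι * (4 * b ^ 2) := by
    calc ∑ k, ξ k ^ 2 ≤ ∑ _k : ι, (2 * b) ^ 2 := Finset.sum_le_sum fun k _ =>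
          pow_le_pow_left₀ (hb.le.trans (hξ k).1) (hξ k).2 2
      _ = _ := by simp only [Finset.sum_const, Finset.card_univ, nsmul_eq_mul]; ring
  have hexp : Real.exp (-(4 * Fintype.card ι * δ * b ^ 2)) ≤
      Real.exp (-(1/2) * (2 * t - s - r) * ∑ k, ξ k ^ 2) := by
    have := mul_le_mul (show 2 * t - s - r ≤ 2 * δ by linarith) hsq (by positivity)
      (by linarith)
    rw [Real.exp_le_exp]
    nlinarith
  have hprod : 2⁻¹ ^ Fintype.card ι * b ^ ∑ k, (1 - 2 * H k) ≤ ∏ k, |ξ k| ^ (1 - 2 * H k) := by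
    simp only [fun k => abs_of_pos (hb.trans_le (hξ k).1)]
    exact half_pow_mul_rpow_sum_le_prod_rpow hb hξ fun k => by linarith [hH k]
  have htime : δ ^ (2 * H0 - 2) ≤ |s - r| ^ (2 * H0 - 2) := by
    rw [abs_sub_comm, abs_of_pos (by linarith)]
    exact rpow_le_rpow_of_nonpos (by linarith) (by linarith) (by linarith)
  have hδ : 0 < δ := by linarith
  unfold firstChaosKernel
  gcongr ?_ * ?_ * ?_

theorem le_lintegral_firstChaosKernel_block (hH0 : H0 ≤ 1) (hH : ∀ k, H k ≤ 1) (hb : 0 < b)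
    (hδ₀ : 0 ≤ δ) (hδ : δ ≤ t) :
    ENNReal.ofReal (Real.exp (-(4 * Fintype.card ι * δ * b ^ 2)) *
        (2⁻¹ ^ Fintype.card ι * b ^ ∑ k, (1 - 2 * H k)) * δ ^ (2 * H0 - 2) *
        (b ^ Fintype.card ι * (δ / 2) * (δ / 2))) ≤
      ∫⁻ s in Set.Ioo (t - δ) (t - δ / 2), ∫⁻ r in Set.Ioo 0 t, ∫⁻ ξ : ι → ℝ,
        ENNReal.ofReal (firstChaosKernel H0 H t s r ξ) := by
  set cube : Set (ι → ℝ) := Set.univ.pi fun _ => Set.Icc b (2 * b)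
  calc _ = ENNReal.ofReal (Real.exp (-(4 * Fintype.card ι * δ * b ^ 2)) *
          (2⁻¹ ^ Fintype.card ι * b ^ ∑ k, (1 - 2 * H k)) * δ ^ (2 * H0 - 2)) *
          volume cube * volume (Set.Ioo (t - δ / 2) t) * volume (Set.Ioo (t - δ) (t - δ / 2)) := by
        simp only [cube, volume_pi_pi, Real.volume_Icc, Real.volume_Ioo, Finset.prod_const, two_mul,
          add_sub_cancel_right,
          Finset.card_univ]
        rw [← ENNReal.ofReal_pow (by linarith), ← ENNReal.ofReal_mul' (by positivity),
          ← ENNReal.ofReal_mul' (by linarith), ← ENNReal.ofReal_mul' (by linarith)]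
        congr 1
        ring
    _ ≤ ∫⁻ s in Set.Ioo (t - δ) (t - δ / 2), ∫⁻ r in Set.Ioo (t - δ / 2) t, ∫⁻ ξ in cube,
          ENNReal.ofReal (firstChaosKernel H0 H t s r ξ) :=
        const_mul_measure_le_setLIntegral measurableSet_Ioo fun _ hs =>
          const_mul_measure_le_setLIntegral measurableSet_Ioo fun _ hr =>
            const_mul_measure_le_setLIntegral (MeasurableSet.univ_pi fun _ => measurableSet_Icc)
              fun _ hξ => ENNReal.ofReal_le_ofReal <|
                le_firstChaosKernel hH0 hH hb (Set.mem_univ_pi.1 hξ) hs hr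
    _ ≤ _ := lintegral_mono fun _ =>
        (lintegral_mono fun _ => setLIntegral_le_lintegral _ _).trans
          (lintegral_mono_set (Set.Ioo_subset_Ioo_left (by linarith)))

theorem firstChaos_block_const_le (hb : 1 ≤ b) (ht : 0 < t)
    (hcond : ∑ k, H k + 2 * H0 ≤ Fintype.card ι) :
    Real.exp (-(4 * Fintype.card ι * t)) * 2⁻¹ ^ Fintype.card ι * t ^ (2 * H0) / 4 ≤
      Real.exp (-(4 * Fintype.card ι * (t / b ^ 2) * b ^ 2)) *
        (2⁻¹ ^ Fintype.card ι * b ^ ∑ k, (1 - 2 * H k)) * (t / b ^ 2) ^ (2 * H0 - 2) *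
        (b ^ Fintype.card ι * (t / b ^ 2 / 2) * (t / b ^ 2 / 2)) := by
  have hb₀ : 0 < b := one_pos.trans_le hb
  have hκ : b ^ (∑ k, (1 - 2 * H k)) * b ^ Fintype.card ι =
      b ^ (∑ k, (1 - 2 * H k) + Fintype.card ι) := by
    rw [rpow_add hb₀, Real.rpow_natCast]
  have hscale := le_rpow_mul_rpow_mul_sq (H0 := H0) hb ht
    (κ := ∑ k, (1 - 2 * H k) + Fintype.card ι) (by
      simp only [Finset.sum_sub_distrib, ← Finset.mul_sum, Finset.sum_const, Finset.card_univ,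
        nsmul_eq_mul, mul_one]
      linarith)
  calc _ = Real.exp (-(4 * Fintype.card ι * t)) * 2⁻¹ ^ Fintype.card ι / 4 * t ^ (2 * H0) := by
        ring
    _ ≤ Real.exp (-(4 * Fintype.card ι * t)) * 2⁻¹ ^ Fintype.card ι / 4 *
          (b ^ (∑ k, (1 - 2 * H k) + Fintype.card ι) *
            ((t / b ^ 2) ^ (2 * H0 - 2) * (t / b ^ 2) ^ 2)) := by gcongr
    _ = _ := by
        rw [← hκ, show 4 * Fintype.card ι * (t / b ^ 2) * b ^ 2 = 4 * Fintype.card ι * t by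
          field_simp]
        ring

end Block

theorem first_chaos_diverges_general (d : ℕ) (H0 : ℝ)
    (hH0 : H0 ∈ Set.Ioo (1/2 : ℝ) 1) (H : Fin d → ℝ)
    (hH : ∀ k, H k ∈ Set.Ioo (0 : ℝ) 1)
    (hcond : (∑ k, H k) + 2 * H0 ≤ d) :
    ∀ t : ℝ, 0 < t →
      (∫⁻ s in Set.Ioo (0 : ℝ) t, ∫⁻ r in Set.Ioo (0 : ℝ) t,
        ∫⁻ ξ : Fin d → ℝ,
          ENNReal.ofReal (Real.exp (-(1/2) * (2 * t - s - r) * ∑ k, (ξ k) ^ 2) *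
            (∏ k, |ξ k| ^ (1 - 2 * H k)) * |s - r| ^ (2 * H0 - 2))) = ⊤ := by
  intro t ht
  set δ : ℕ → ℝ := fun n => t / ((2 : ℝ) ^ n) ^ 2
  refine lintegral_eq_top_of_pairwise_disjoint_const_le (μ := volume.restrict (Set.Ioo 0 t))
    (S := fun n => Set.Ioo (t - δ n) (t - δ n / 2))
    (c := ENNReal.ofReal (Real.exp (-(4 * d * t)) * 2⁻¹ ^ d * t ^ (2 * H0) / 4))
    (fun _ => measurableSet_Ioo) (pairwise_disjoint_Ioo_sub_half fun m n hmn => ?_)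
    (ENNReal.ofReal_pos.2 (by positivity)).ne' fun n => ?_
  · have h : 2 * 2 ^ m ≤ (2 : ℝ) ^ n := by
      rw [← pow_succ']
      exact pow_le_pow_right₀ one_le_two hmn
    rw [div_div, div_le_div_iff_of_pos_left ht (by positivity) (by positivity)]
    nlinarith [show (0 : ℝ) < 2 ^ m by positivity]
  · have hδ₀ : 0 ≤ δ n := by positivity
    have hδ : δ n ≤ t := div_le_self ht.le (one_le_pow₀ (one_le_pow₀ one_le_two))
    have hblock := le_lintegral_firstChaosKernel_block (b := 2 ^ n) (H := H) hH0.2.le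
      (fun k => (hH k).2.le) (by positivity) hδ₀ hδ
    have hconst := firstChaos_block_const_le (b := 2 ^ n) (H := H) (H0 := H0)
      (one_le_pow₀ one_le_two) ht (by simpa using hcond)
    simp only [Fintype.card_fin] at hblock hconst
    rw [Measure.restrict_restrict measurableSet_Ioo,
      Set.inter_eq_left.2 (Set.Ioo_subset_Ioo (by linarith) (by linarith))]
    exact (ENNReal.ofReal_le_ofReal hconst).trans hblock

/-- For `d ≥ 1`, `H₀ ∈ (1/2,1)`, `H ∈ (0,1)^d`, if `|H| + 2H₀ ≤ d`
then for every `t > 0` the first-chaos integral diverges: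
`∫_0^t ∫_0^t ∫_{ℝ^d} exp(−(1/2)(2t − s − r)|ξ|²) ∏_k |ξ_k|^{1−2H_k} |s − r|^{2H₀−2}
  dξ ds dr = +∞`. -/
theorem first_chaos_diverges (d : ℕ) (hd : 1 ≤ d) (H0 : ℝ)
    (hH0 : H0 ∈ Set.Ioo (1/2 : ℝ) 1) (H : Fin d → ℝ)
    (hH : ∀ k, H k ∈ Set.Ioo (0 : ℝ) 1)
    (hcond : (∑ k, H k) + 2 * H0 ≤ d) :
    ∀ t : ℝ, 0 < t →
      (∫⁻ s in Set.Ioo (0 : ℝ) t, ∫⁻ r in Set.Ioo (0 : ℝ) t,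
        ∫⁻ ξ : Fin d → ℝ,
          ENNReal.ofReal (Real.exp (-(1/2) * (2 * t - s - r) * ∑ k, (ξ k) ^ 2) *
            (∏ k, |ξ k| ^ (1 - 2 * H k)) * |s - r| ^ (2 * H0 - 2))) = ⊤ :=
  first_chaos_diverges_general d H0 hH0 H hH hcond
end

section
/- Let H_0 ∈ (1/2,1) and 0 ≤ ρ < H_0. Then there exists a constant C > 0, depending only on H_0 and ρ, such that for all s_2 > 0 and r_2 > 0: ∫_0^{s_2} ∫_0^{r_2} (s_2 − s_1)^{−ρ} (r_2 − r_1)^{−ρ} |s_1 − r_1|^{2H_0−2} dr_1 ds_1 ≤ C · s_2^{H_0−ρ} · r_2^{H_0−ρ}. -/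
/-!
Cut the square `(0, s₂) × (0, r₂)` along the diagonal. The integrand is symmetric under
`(s₁, r₁, s₂, r₂) ↦ (r₁, s₁, r₂, s₂)`, so by Tonelli the part below the diagonal is the part
above it with `s₂` and `r₂` exchanged. Above the diagonal, the inner integral over
`r₁ ∈ (s₁, r₂)` is a Beta integral, bounded by `c (r₂ - s₁)^(2H₀ - 1 - ρ)` after cutting the
interval at its midpoint. What is left is `∫₀^m (s₂ - s₁)^(-ρ) (r₂ - s₁)^(2H₀ - 1 - ρ) ds₁` with
`m = min s₂ r₂`; replacing `s₂ - s₁` by `m - s₁`, and `r₂ - s₁` by `m - s₁` or `r₂` according to the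
sign of its exponent, leaves an explicit integral, a multiple of `r₂^β m^(2H₀ - 2ρ - β)` with
`β = max (2H₀ - 1 - ρ) 0 ≤ H₀ - ρ`, which is at most a multiple of `s₂^(H₀ - ρ) r₂^(H₀ - ρ)`.
-/

open MeasureTheory Real ENNReal Set

lemma lintegral_Ioo_ofReal_eq_intervalIntegral {f : ℝ → ℝ} {a b : ℝ} (hab : a ≤ b)
    (hf : IntervalIntegrable f volume a b) (hf0 : ∀ x ∈ Ioo a b, 0 ≤ f x) :
    ∫⁻ x in Ioo a b, ENNReal.ofReal (f x) = ENNReal.ofReal (∫ x in a..b, f x) := by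
  rw [intervalIntegral.integral_of_le hab, integral_Ioc_eq_integral_Ioo,
    ofReal_integral_eq_lintegral_ofReal (hf.1.mono_set Ioo_subset_Ioc_self)
      (ae_restrict_of_forall_mem measurableSet_Ioo hf0)]

lemma lintegral_Ioo_sub_rpow {a b c : ℝ} (hab : a ≤ b) (hc : -1 < c) :
    ∫⁻ x in Ioo a b, ENNReal.ofReal ((x - a) ^ c) =
      ENNReal.ofReal ((b - a) ^ (c + 1) / (c + 1)) := by
  have hint : IntervalIntegrable (fun x => (x - a) ^ c) volume a b := by
    simpa using
      (intervalIntegral.intervalIntegrable_rpow' hc (a := 0) (b := b - a)).comp_sub_right a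
  rw [lintegral_Ioo_ofReal_eq_intervalIntegral hab hint
      fun x hx => rpow_nonneg (sub_nonneg.2 hx.1.le) c,
    intervalIntegral.integral_comp_sub_right (· ^ c), sub_self, integral_rpow (Or.inl hc),
    zero_rpow (by linarith), sub_zero]

lemma lintegral_Ioo_rpow_sub {a b c : ℝ} (hab : a ≤ b) (hc : -1 < c) :
    ∫⁻ x in Ioo a b, ENNReal.ofReal ((b - x) ^ c) =
      ENNReal.ofReal ((b - a) ^ (c + 1) / (c + 1)) := by
  have hint : IntervalIntegrable (fun x => (b - x) ^ c) volume a b := by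
    simpa using
      (intervalIntegral.intervalIntegrable_rpow' hc (a := 0) (b := b - a)).comp_sub_left b |>.symm
  rw [lintegral_Ioo_ofReal_eq_intervalIntegral hab hint
      fun x hx => rpow_nonneg (sub_nonneg.2 hx.2.le) c,
    intervalIntegral.integral_comp_sub_left (· ^ c), sub_self, integral_rpow (Or.inl hc),
    zero_rpow (by linarith), sub_zero]

lemma rpow_mul_rpow_le_midpoint {x y p q : ℝ} (hx : 0 < x) (hy : 0 < y) (hp : p ≤ 0)
    (hq : q ≤ 0) :
    x ^ p * y ^ q ≤ ((x + y) / 2) ^ p * y ^ q + ((x + y) / 2) ^ q * x ^ p := by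
  have hxp := rpow_nonneg hx.le p
  have hyq := rpow_nonneg hy.le q
  have hm : 0 < (x + y) / 2 := by positivity
  rcases le_total y x with hyx | hxy
  · have : x ^ p ≤ ((x + y) / 2) ^ p := rpow_le_rpow_of_nonpos hm (by linarith) hp
    nlinarith [rpow_nonneg hm.le q]
  · have : y ^ q ≤ ((x + y) / 2) ^ q := rpow_le_rpow_of_nonpos hm (by linarith) hq
    nlinarith [rpow_nonneg hm.le p]

lemma lintegral_Ioo_rpow_sub_mul_sub_rpow_le {p q a b : ℝ} (hp : -1 < p) (hp0 : p ≤ 0)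
    (hq : -1 < q) (hq0 : q ≤ 0) (hab : a < b) :
    ∫⁻ u in Ioo a b, ENNReal.ofReal ((b - u) ^ p * (u - a) ^ q) ≤
      ENNReal.ofReal ((2 ^ (-p) / (q + 1) + 2 ^ (-q) / (p + 1)) * (b - a) ^ (p + q + 1)) := by
  set m := (b - a) / 2 with hm_def
  have hd : 0 < b - a := sub_pos.2 hab
  have hm : 0 < m := by positivity
  have hp1 : 0 < p + 1 := by linarith
  have hq1 : 0 < q + 1 := by linarith
  calc ∫⁻ u in Ioo a b, ENNReal.ofReal ((b - u) ^ p * (u - a) ^ q)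
      ≤ ∫⁻ u in Ioo a b, (ENNReal.ofReal (m ^ p) * ENNReal.ofReal ((u - a) ^ q) +
          ENNReal.ofReal (m ^ q) * ENNReal.ofReal ((b - u) ^ p)) := by
        refine setLIntegral_mono' measurableSet_Ioo fun u hu => ?_
        rw [← ofReal_mul (rpow_nonneg hm.le p), ← ofReal_mul (rpow_nonneg hm.le q)]
        refine (ofReal_le_ofReal ?_).trans ofReal_add_le
        have := rpow_mul_rpow_le_midpoint (sub_pos.2 hu.2) (sub_pos.2 hu.1) hp0 hq0
        rwa [sub_add_sub_cancel] at this
    _ = ENNReal.ofReal (m ^ p) * ENNReal.ofReal ((b - a) ^ (q + 1) / (q + 1)) +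
          ENNReal.ofReal (m ^ q) * ENNReal.ofReal ((b - a) ^ (p + 1) / (p + 1)) := by
        rw [lintegral_add_left (by fun_prop), lintegral_const_mul _ (by fun_prop),
          lintegral_const_mul _ (by fun_prop), lintegral_Ioo_sub_rpow hab.le hq,
          lintegral_Ioo_rpow_sub hab.le hp]
    _ = _ := by
        rw [← ofReal_mul (rpow_nonneg hm.le p), ← ofReal_mul (rpow_nonneg hm.le q),
          ← ofReal_add (by positivity) (by positivity)]
        have hm_rpow : ∀ c : ℝ, m ^ c = 2 ^ (-c) * (b - a) ^ c := fun c => by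
          rw [hm_def, div_eq_mul_inv, mul_rpow hd.le (by norm_num), Real.inv_rpow (by norm_num),
            Real.rpow_neg (by norm_num), mul_comm]
        have hsplit : ∀ c c' : ℝ, (b - a) ^ (c + c' + 1) = (b - a) ^ c * (b - a) ^ (c' + 1) :=
          fun c c' => by rw [← rpow_add hd, add_assoc]
        have hswap : (b - a) ^ q * (b - a) ^ (p + 1) = (b - a) ^ p * (b - a) ^ (q + 1) := by
          rw [← hsplit, ← hsplit, add_comm p q]
        rw [hm_rpow, hm_rpow, hsplit p q]
        congr 1
        linear_combination 2 ^ (-q) / (p + 1) * hswap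

lemma rpow_mul_min_rpow_le {t r q a : ℝ} (ht : 0 < t) (hr : 0 < r) (ha : 0 ≤ a) (hqa : q ≤ a) :
    r ^ q * min t r ^ (2 * a - q) ≤ t ^ a * r ^ a := by
  rcases le_total t r with htr | hrt
  · rw [min_eq_left htr]
    calc r ^ q * t ^ (2 * a - q) = t ^ a * (r ^ q * t ^ (a - q)) := by
          rw [show 2 * a - q = a + (a - q) by ring, rpow_add ht]; ring
      _ ≤ t ^ a * (r ^ q * r ^ (a - q)) := by gcongr
      _ = t ^ a * r ^ a := by rw [← rpow_add hr, add_sub_cancel]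
  · rw [min_eq_right hrt, ← rpow_add hr, show q + (2 * a - q) = a + a by ring, rpow_add hr]
    gcongr

lemma lintegral_Ioo_min_rpow_mul_rpow_le {p q a t r : ℝ} (hp : p ≤ 0) (ha : 0 < a)
    (hqa : q ≤ a) (hpq : p + q + 1 = 2 * a) (ht : 0 < t) (hr : 0 < r) :
    ∫⁻ x in Ioo 0 (min t r), ENNReal.ofReal ((t - x) ^ p * (r - x) ^ q) ≤
      ENNReal.ofReal (t ^ a * r ^ a / (2 * a - max q 0)) := by
  set m := min t r
  have hm : 0 < m := lt_min ht hr
  have hexp : p + min q 0 + 1 = 2 * a - max q 0 := by linarith [min_add_max q 0]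
  have hpos : 0 < 2 * a - max q 0 := by linarith [max_le hqa ha.le]
  calc ∫⁻ x in Ioo 0 m, ENNReal.ofReal ((t - x) ^ p * (r - x) ^ q)
      ≤ ∫⁻ x in Ioo 0 m, ENNReal.ofReal (r ^ max q 0) *
          ENNReal.ofReal ((m - x) ^ (p + min q 0)) := by
        refine setLIntegral_mono' measurableSet_Ioo fun x hx => ?_
        rw [← ofReal_mul (rpow_nonneg hr.le _)]
        apply ofReal_le_ofReal
        have hmx : 0 < m - x := sub_pos.2 hx.2
        have htx : m - x ≤ t - x := by linarith [min_le_left t r]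
        have hrx : m - x ≤ r - x := by linarith [min_le_right t r]
        have hsplit : (r - x) ^ q = (r - x) ^ min q 0 * (r - x) ^ max q 0 := by
          rw [← rpow_add (hmx.trans_le hrx), min_add_max, add_zero]
        calc (t - x) ^ p * (r - x) ^ q
            ≤ (m - x) ^ p * ((m - x) ^ min q 0 * r ^ max q 0) := by
              have hrx0 : 0 ≤ r - x := hmx.le.trans hrx
              rw [hsplit]
              refine mul_le_mul (rpow_le_rpow_of_nonpos hmx htx hp) (mul_le_mul
                (rpow_le_rpow_of_nonpos hmx hrx (min_le_right q 0))
                (rpow_le_rpow hrx0 (by linarith [hx.1]) (le_max_right q 0))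
                (rpow_nonneg hrx0 _) (rpow_nonneg hmx.le _))
                (mul_nonneg (rpow_nonneg hrx0 _) (rpow_nonneg hrx0 _)) (rpow_nonneg hmx.le _)
          _ = r ^ max q 0 * (m - x) ^ (p + min q 0) := by rw [rpow_add hmx]; ring
    _ = ENNReal.ofReal (r ^ max q 0) *
          ENNReal.ofReal (m ^ (2 * a - max q 0) / (2 * a - max q 0)) := by
        rw [lintegral_const_mul _ (by fun_prop), lintegral_Ioo_rpow_sub hm.le (by linarith),
          sub_zero, hexp]
    _ ≤ ENNReal.ofReal (t ^ a * r ^ a / (2 * a - max q 0)) := by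
        rw [← ofReal_mul (rpow_nonneg hr.le _), ← mul_div_assoc]
        exact ofReal_le_ofReal <| div_le_div_of_nonneg_right
          (rpow_mul_min_rpow_le ht hr ha.le (max_le hqa ha.le)) hpos.le

/-- `(t, r, s, u)` stand for `(s₂, r₂, s₁, r₁)`, and `(p, q)` for `(-ρ, 2H₀ - 2)`. -/
noncomputable def hlsKernel (p q t r s u : ℝ) : ℝ≥0∞ :=
  ENNReal.ofReal ((t - s) ^ p * (r - u) ^ p * |s - u| ^ q)

lemma hlsKernel_comm (p q t r s u : ℝ) : hlsKernel p q t r s u = hlsKernel p q r t u s := by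
  rw [hlsKernel, hlsKernel, abs_sub_comm, mul_comm ((t - s) ^ p)]

lemma measurable_hlsKernel (p q t r : ℝ) :
    Measurable fun z : ℝ × ℝ => hlsKernel p q t r z.1 z.2 := by
  unfold hlsKernel; fun_prop

lemma measurable_indicator_Ici_hlsKernel (p q t r : ℝ) :
    Measurable fun z : ℝ × ℝ => (Ici z.1).indicator (hlsKernel p q t r z.1) z.2 :=
  (measurable_hlsKernel p q t r).indicator (measurableSet_le measurable_fst measurable_snd)

noncomputable def upperHLSIntegral (p q t r : ℝ) : ℝ≥0∞ :=
  ∫⁻ s in Ioo 0 t, ∫⁻ u in Ioo 0 r, (Ici s).indicator (hlsKernel p q t r s) u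

lemma lintegral_hlsKernel_le_upper_add_upper (p q t r : ℝ) :
    ∫⁻ s in Ioo 0 t, ∫⁻ u in Ioo 0 r, hlsKernel p q t r s u ≤
      upperHLSIntegral p q t r + upperHLSIntegral p q r t := by
  calc ∫⁻ s in Ioo 0 t, ∫⁻ u in Ioo 0 r, hlsKernel p q t r s u
      ≤ ∫⁻ s in Ioo 0 t, ∫⁻ u in Ioo 0 r, ((Ici s).indicator (hlsKernel p q t r s) u +
          (Iic s).indicator (hlsKernel p q t r s) u) := by
        refine lintegral_mono fun s => lintegral_mono fun u => ?_
        rcases le_total s u with h | h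
        · simp [indicator_of_mem (mem_Ici.2 h)]
        · simp [indicator_of_mem (mem_Iic.2 h)]
    _ = upperHLSIntegral p q t r +
          ∫⁻ s in Ioo 0 t, ∫⁻ u in Ioo 0 r, (Iic s).indicator (hlsKernel p q t r s) u := by
        have hmeas : Measurable fun s =>
            ∫⁻ u in Ioo 0 r, (Ici s).indicator (hlsKernel p q t r s) u :=
          (measurable_indicator_Ici_hlsKernel p q t r).lintegral_prod_right'
        rw [upperHLSIntegral, ← lintegral_add_left hmeas]
        refine lintegral_congr fun s => lintegral_add_left ?_ _
        exact (measurable_indicator_Ici_hlsKernel p q t r).comp measurable_prodMk_left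
    _ = upperHLSIntegral p q t r + upperHLSIntegral p q r t := by
        have hlower : Measurable fun z : ℝ × ℝ => (Iic z.1).indicator (hlsKernel p q t r z.1) z.2 :=
          (measurable_hlsKernel p q t r).indicator (measurableSet_le measurable_snd measurable_fst)
        rw [lintegral_lintegral_swap hlower.aemeasurable, upperHLSIntegral]
        congr 1
        refine lintegral_congr fun u => lintegral_congr fun s => ?_
        simp only [indicator, mem_Iic, mem_Ici, hlsKernel_comm p q t r s u]

lemma lintegral_indicator_Ici_hlsKernel_le {p q t r s : ℝ} (hp : -1 < p) (hp0 : p ≤ 0)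
    (hq : -1 < q) (hq0 : q ≤ 0) (hst : s ≤ t) :
    ∫⁻ u in Ioo 0 r, (Ici s).indicator (hlsKernel p q t r s) u ≤
      (Iio r).indicator (fun s => ENNReal.ofReal ((2 ^ (-p) / (q + 1) + 2 ^ (-q) / (p + 1)) *
        ((t - s) ^ p * (r - s) ^ (p + q + 1)))) s := by
  rw [setLIntegral_indicator measurableSet_Ici]
  refine (lintegral_mono_set' (μ := volume) (t := Ioo s r) ?_).trans ?_
  · have hsub : Ici s ∩ Ioo 0 r ⊆ Ico s r := fun u hu => ⟨hu.1, hu.2.2⟩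
    exact hsub.eventuallyLE.trans Ioo_ae_eq_Ico.symm.le
  rcases lt_or_ge s r with hsr | hrs
  · have hts : 0 ≤ (t - s) ^ p := rpow_nonneg (sub_nonneg.2 hst) p
    rw [indicator_of_mem (mem_Iio.2 hsr)]
    calc ∫⁻ u in Ioo s r, hlsKernel p q t r s u
        = ∫⁻ u in Ioo s r, ENNReal.ofReal ((t - s) ^ p) *
            ENNReal.ofReal ((r - u) ^ p * (u - s) ^ q) := by
          refine setLIntegral_congr_fun measurableSet_Ioo fun u hu => ?_
          rw [hlsKernel, ← ofReal_mul hts, abs_sub_comm, abs_of_pos (sub_pos.2 hu.1), mul_assoc]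
      _ ≤ ENNReal.ofReal ((t - s) ^ p) * ENNReal.ofReal ((2 ^ (-p) / (q + 1) +
            2 ^ (-q) / (p + 1)) * (r - s) ^ (p + q + 1)) := by
          rw [lintegral_const_mul _ (by fun_prop)]
          gcongr
          exact lintegral_Ioo_rpow_sub_mul_sub_rpow_le hp hp0 hq hq0 hsr
      _ = _ := by rw [← ofReal_mul hts, mul_left_comm]
  · rw [Ioo_eq_empty (not_lt.2 hrs), Measure.restrict_empty, lintegral_zero_measure]
    exact zero_le

lemma upperHLSIntegral_le {p q a t r : ℝ} (hp0 : p ≤ 0) (hq : -1 < q) (hq0 : q ≤ 0) (ha : 0 < a)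
    (hpqa : 2 * p + q + 2 = 2 * a) (ht : 0 < t) (hr : 0 < r) :
    upperHLSIntegral p q t r ≤ ENNReal.ofReal ((2 ^ (-p) / (q + 1) + 2 ^ (-q) / (p + 1)) *
      (t ^ a * r ^ a / (2 * a - max (p + q + 1) 0))) := by
  have hp : -1 < p := by linarith
  have hc : 0 ≤ 2 ^ (-p) / (q + 1) + 2 ^ (-q) / (p + 1) :=
    add_nonneg (div_nonneg (by positivity) (by linarith)) (div_nonneg (by positivity) (by linarith))
  calc upperHLSIntegral p q t r
      ≤ ∫⁻ s in Ioo 0 t, (Iio r).indicator (fun s => ENNReal.ofReal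
          ((2 ^ (-p) / (q + 1) + 2 ^ (-q) / (p + 1)) * ((t - s) ^ p * (r - s) ^ (p + q + 1)))) s :=
        setLIntegral_mono' measurableSet_Ioo fun s hs =>
          lintegral_indicator_Ici_hlsKernel_le hp hp0 hq hq0 hs.2.le
    _ = ENNReal.ofReal (2 ^ (-p) / (q + 1) + 2 ^ (-q) / (p + 1)) *
          ∫⁻ s in Ioo 0 (min t r), ENNReal.ofReal ((t - s) ^ p * (r - s) ^ (p + q + 1)) := by
        simp_rw [ofReal_mul hc]
        rw [setLIntegral_indicator measurableSet_Iio, inter_comm, Ioo_inter_Iio,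
          lintegral_const_mul _ (by fun_prop)]
    _ ≤ _ := by
        rw [ofReal_mul hc]
        gcongr
        exact lintegral_Ioo_min_rpow_mul_rpow_le hp0 ha (by linarith) (by linarith) ht hr

theorem exists_lintegral_hlsKernel_le {p q a : ℝ} (hp0 : p ≤ 0) (hq : -1 < q) (hq0 : q ≤ 0)
    (ha : 0 < a) (hpqa : 2 * p + q + 2 = 2 * a) :
    ∃ C > 0, ∀ t r : ℝ, 0 < t → 0 < r →
      ∫⁻ s in Ioo 0 t, ∫⁻ u in Ioo 0 r, hlsKernel p q t r s u ≤
        ENNReal.ofReal (C * t ^ a * r ^ a) := by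
  set c := 2 ^ (-p) / (q + 1) + 2 ^ (-q) / (p + 1)
  set D := 2 * a - max (p + q + 1) 0
  have hc : 0 < c := add_pos (div_pos (by positivity) (by linarith))
    (div_pos (by positivity) (by linarith))
  have hD : 0 < D := by linarith [max_le (show p + q + 1 ≤ a by linarith) ha.le]
  refine ⟨2 * c / D, by positivity, fun t r ht hr => ?_⟩
  calc ∫⁻ s in Ioo 0 t, ∫⁻ u in Ioo 0 r, hlsKernel p q t r s u
      ≤ upperHLSIntegral p q t r + upperHLSIntegral p q r t :=
        lintegral_hlsKernel_le_upper_add_upper p q t r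
    _ ≤ ENNReal.ofReal (c * (t ^ a * r ^ a / D)) + ENNReal.ofReal (c * (r ^ a * t ^ a / D)) :=
        add_le_add (upperHLSIntegral_le hp0 hq hq0 ha hpqa ht hr)
          (upperHLSIntegral_le hp0 hq hq0 ha hpqa hr ht)
    _ = ENNReal.ofReal (2 * c / D * t ^ a * r ^ a) := by
        rw [← ofReal_add (by positivity) (by positivity)]
        congr 1
        ring

/-- For `H₀ ∈ (1/2,1)` and `0 ≤ ρ < H₀` there is a constant `C > 0`,
depending only on `H₀` and `ρ`, such that for all `s₂, r₂ > 0`: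
`∫_0^{s₂} ∫_0^{r₂} (s₂ − s₁)^{−ρ} (r₂ − r₁)^{−ρ} |s₁ − r₁|^{2H₀−2} dr₁ ds₁
  ≤ C s₂^{H₀−ρ} r₂^{H₀−ρ}`. -/
theorem hls_double_integral_bound (H0 ρ : ℝ) (hH0 : H0 ∈ Set.Ioo (1/2 : ℝ) 1)
    (hρ0 : 0 ≤ ρ) (hρ : ρ < H0) :
    ∃ C : ℝ, 0 < C ∧ ∀ s2 r2 : ℝ, 0 < s2 → 0 < r2 →
      (∫⁻ s1 in Set.Ioo (0 : ℝ) s2, ∫⁻ r1 in Set.Ioo (0 : ℝ) r2,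
        ENNReal.ofReal ((s2 - s1) ^ (-ρ) * (r2 - r1) ^ (-ρ) *
          |s1 - r1| ^ (2 * H0 - 2))) ≤
        ENNReal.ofReal (C * s2 ^ (H0 - ρ) * r2 ^ (H0 - ρ)) := by
  obtain ⟨hH1, hH2⟩ := hH0
  exact exists_lintegral_hlsKernel_le (by linarith) (by linarith) (by linarith) (by linarith)
    (by ring)
end
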